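/- Pointwise convergence of the truncated effective-noise recursion: suppose that for every m ≥ 0, every k = 1,…,v and every j = 1,…,d the functions x ↦ u⁽ᵏ⁾(x, tₘ) and x ↦ G⁽ᵏʲ⁾(x, tₘ) are real-analytic on ℝᵛ with multi-index Taylor series at every point converging absolutely on all of ℝᵛ, and suppose there are finite constants A⁽ʲ⁾ₘ with |ΔW⁽ʲ⁾ₘ(ω)| ≤ A⁽ʲ⁾ₘ for all m, j and all ω ∈ Ω. Then for every n ≥ 1 and every ω ∈ Ω, the truncated effective noise converges to the exact effective noise: lim_{N→∞} ΔŴₙ,₍N₎(ω) = ΔŴₙ(ω). -/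

import Mathlib

open MeasureTheory Finset Filter

/-- Partial derivative of `f : ℝᵛ → ℝ` in the `k`-th coordinate direction. -/
noncomputable def pd1 {v : ℕ} (k : Fin v) (f : (Fin v → ℝ) → ℝ) : (Fin v → ℝ) → ℝ :=
  fun x => deriv (fun s => f (Function.update x k s)) (x k)

/-- Mixed partial derivative `∂ʳ f` associated with the multi-index `r`. -/
noncomputable def mpd {v : ℕ} (r : Fin v → ℕ) (f : (Fin v → ℝ) → ℝ) : (Fin v → ℝ) → ℝ :=
  ((List.ofFn fun k : Fin v => (pd1 k)^[r k]).foldr (· ∘ ·) id) f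

/-- The finset of `v`-dimensional multi-indices with every component `≤ N`
(it contains all multi-indices `r` with `|r| ≤ N`). -/
def midx (v N : ℕ) : Finset (Fin v → ℕ) := Fintype.piFinset fun _ => Finset.range (N + 1)

/-!
Induction on `n`. At step `n + 1` the truncated recursion consists of truncated multi-index
Taylor sums of `u` and `G` at the central point `xᶜₙ`, evaluated at the truncated noise of step
`n`, which converges to `ΔŴₙ` by induction. The Taylor series converge absolutely everywhere, in
particular at `|ΔŴₙ| + 1`, and this series dominates every term once the truncated noise is close
to `ΔŴₙ`; so by Tannery's theorem the truncated sums converge to `u(xᶜₙ + ΔŴₙ) - u(xᶜₙ)` (the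
drift sum omits the order-zero term) and to `G(xᶜₙ + ΔŴₙ)`. Since `xᶜₙ + ΔŴₙ = X̂ₙ`, these limits
assemble, by the two Euler steps, exactly to `ΔŴₙ₊₁`.
-/

open Topology

theorem tendsto_sum_mul_prod_pow {ι α : Type*} [Fintype ι] {𝓕 : Filter α} {a : (ι → ℕ) → ℝ}
    {M Y : ι → ℝ} (hM : ∀ l, |Y l| < M l)
    (ha : Summable fun r => a r * ∏ l, M l ^ r l) {F : α → Finset (ι → ℕ)}
    (hF : ∀ r, ∀ᶠ N in 𝓕, r ∈ F N) {y : α → ι → ℝ} (hy : Tendsto y 𝓕 (𝓝 Y)) :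
    Tendsto (fun N => ∑ r ∈ F N, a r * ∏ l, y N l ^ r l) 𝓕
      (𝓝 (∑' r, a r * ∏ l, Y l ^ r l)) := by
  refine (tendsto_tsum_of_dominated_convergence ha.abs (fun r => ?_) ?_).congr
    fun N => (sum_eq_tsum_indicator _ (F N)).symm
  · have hterm : Tendsto (fun N => a r * ∏ l, y N l ^ r l) 𝓕 (𝓝 (a r * ∏ l, Y l ^ r l)) :=
      tendsto_const_nhds.mul <| tendsto_finsetProd _ fun l _ => (tendsto_pi_nhds.1 hy l).pow _
    refine hterm.congr' ?_
    filter_upwards [hF r] with N hN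
    rw [Set.indicator_of_mem (mem_coe.2 hN)]
  · have hyM : ∀ᶠ N in 𝓕, ∀ l, |y N l| ≤ M l :=
      eventually_all.2 fun l => (tendsto_pi_nhds.1 hy l).abs.eventually (eventually_le_nhds (hM l))
    filter_upwards [hyM] with N hN r
    have hM0 : ∀ l, 0 ≤ M l := fun l => (abs_nonneg _).trans (hM l).le
    calc ‖(↑(F N) : Set (ι → ℕ)).indicator (fun r => a r * ∏ l, y N l ^ r l) r‖
        ≤ |a r * ∏ l, y N l ^ r l| := norm_indicator_le_norm_self _ _
      _ = |a r| * ∏ l, |y N l| ^ r l := by simp only [abs_mul, abs_prod, abs_pow]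
      _ ≤ |a r| * ∏ l, M l ^ r l := by gcongr with l; exact hN l
      _ = |a r * ∏ l, M l ^ r l| := by
        rw [abs_mul, abs_of_nonneg (prod_nonneg fun l _ => pow_nonneg (hM0 l) _)]

section Taylor

variable {v : ℕ}

noncomputable def taylorTerm (f : (Fin v → ℝ) → ℝ) (c y : Fin v → ℝ) (r : Fin v → ℕ) : ℝ :=
  (1 / ((∏ l, Nat.factorial (r l) : ℕ) : ℝ)) * mpd r f c * ∏ l, y l ^ r l

theorem mpd_zero (f : (Fin v → ℝ) → ℝ) : mpd 0 f = f := by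
  have foldr_id : ∀ m, (List.replicate m (id : ((Fin v → ℝ) → ℝ) → (Fin v → ℝ) → ℝ)).foldr
      (· ∘ ·) id = id := fun m => by
    induction m with
    | zero => rfl
    | succ m ih => simp [List.replicate_succ, ih]
  simpa [mpd] using congrFun (foldr_id v) f

theorem taylorTerm_zero (f : (Fin v → ℝ) → ℝ) (c y : Fin v → ℝ) : taylorTerm f c y 0 = f c := by
  simp [taylorTerm, mpd_zero]

theorem mem_midx_of_sum_le {r : Fin v → ℕ} {N : ℕ} (hr : ∑ l, r l ≤ N) : r ∈ midx v N :=
  Fintype.mem_piFinset.2 fun l =>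
    mem_range_succ_iff.2 <| (single_le_sum (fun l _ => Nat.zero_le (r l)) (mem_univ l)).trans hr

theorem filter_midx_pos_order_eq_erase (N : ℕ) :
    (midx v N).filter (fun r => 1 ≤ ∑ l, r l ∧ ∑ l, r l ≤ N)
      = ((midx v N).filter (fun r => ∑ l, r l ≤ N)).erase 0 := by
  ext r
  simp only [mem_erase, mem_filter, Nat.one_le_iff_ne_zero, ne_eq, sum_eq_zero_iff, mem_univ,
    true_imp_iff, funext_iff, Pi.zero_apply]
  tauto

variable {f : (Fin v → ℝ) → ℝ} {c : Fin v → ℝ} {y : ℕ → Fin v → ℝ} {Y : Fin v → ℝ}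

theorem tendsto_sum_taylorTerm (hf : ∀ y, HasSum (taylorTerm f c y) (f (c + y)))
    {F : ℕ → Finset (Fin v → ℕ)} (hF : ∀ r, ∀ᶠ N in atTop, r ∈ F N)
    (hy : Tendsto y atTop (𝓝 Y)) :
    Tendsto (fun N => ∑ r ∈ F N, taylorTerm f c (y N) r) atTop (𝓝 (f (c + Y))) := by
  rw [← (hf Y).tsum_eq]
  exact tendsto_sum_mul_prod_pow (M := fun l => |Y l| + 1) (fun l => lt_add_one _)
    (hf _).summable hF hy

theorem tendsto_sum_taylorTerm_pos_order (hf : ∀ y, HasSum (taylorTerm f c y) (f (c + y)))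
    (hy : Tendsto y atTop (𝓝 Y)) :
    Tendsto (fun N => ∑ r ∈ (midx v N).filter (fun r => 1 ≤ ∑ l, r l ∧ ∑ l, r l ≤ N),
      taylorTerm f c (y N) r) atTop (𝓝 (f (c + Y) - f c)) := by
  have hF : ∀ r, ∀ᶠ N in atTop, r ∈ (midx v N).filter (fun r => ∑ l, r l ≤ N) := fun r => by
    filter_upwards [eventually_ge_atTop (∑ l, r l)] with N hN
    exact mem_filter.2 ⟨mem_midx_of_sum_le hN, hN⟩
  have hzero : ∀ N, (0 : Fin v → ℕ) ∈ (midx v N).filter (fun r => ∑ l, r l ≤ N) := fun N =>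
    mem_filter.2 ⟨mem_midx_of_sum_le (by simp), by simp⟩
  simp_rw [filter_midx_pos_order_eq_erase, sum_erase_eq_sub (hzero _), taylorTerm_zero]
  exact (tendsto_sum_taylorTerm hf hF hy).sub_const _

theorem tendsto_sum_taylorTerm_order_lt (hf : ∀ y, HasSum (taylorTerm f c y) (f (c + y)))
    (hy : Tendsto y atTop (𝓝 Y)) :
    Tendsto (fun N => ∑ r ∈ (midx v N).filter (fun r => ∑ l, r l + 1 ≤ N),
      taylorTerm f c (y N) r) atTop (𝓝 (f (c + Y))) := by
  refine tendsto_sum_taylorTerm hf (fun r => ?_) hy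
  filter_upwards [eventually_ge_atTop (∑ l, r l + 1)] with N hN
  exact mem_filter.2 ⟨mem_midx_of_sum_le (by omega), hN⟩

end Taylor

theorem euler_step_sub_euler_step_apply {v d : ℕ} (b : (Fin v → ℝ) → Fin v → ℝ)
    (σ : (Fin v → ℝ) → Matrix (Fin v) (Fin d) ℝ) (h : ℝ) (x y : Fin v → ℝ) (w : Fin d → ℝ)
    (k : Fin v) :
    (x + y + h • b (x + y) + (σ (x + y)).mulVec w - (x + h • b x)) k
      = y k + h * (b (x + y) k - b x k) + ∑ j, σ (x + y) k j * w j := by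
  simp only [Pi.sub_apply, Pi.add_apply, Pi.smul_apply, smul_eq_mul, Matrix.mulVec, dotProduct]
  ring

theorem truncated_effective_noise_pointwise_convergence_general
    (v d : ℕ) (h : ℝ) (t0 : ℝ) (x0 : Fin v → ℝ)
    (u : (Fin v → ℝ) → ℝ → (Fin v → ℝ))
    (G : (Fin v → ℝ) → ℝ → Matrix (Fin v) (Fin d) ℝ)
    {Ω : Type*}
    (dW : ℕ → Ω → (Fin d → ℝ))
    (Xhat : ℕ → Ω → (Fin v → ℝ)) (xc : ℕ → (Fin v → ℝ))
    (hX0 : ∀ ω, Xhat 0 ω = x0)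
    (hX : ∀ (n : ℕ) (ω : Ω), Xhat (n + 1) ω
        = Xhat n ω + h • u (Xhat n ω) (t0 + n * h)
          + (G (Xhat n ω) (t0 + n * h)).mulVec (dW (n + 1) ω))
    (hxc0 : xc 0 = x0)
    (hxc : ∀ n : ℕ, xc (n + 1) = xc n + h • u (xc n) (t0 + n * h))
    (DW : ℕ → Ω → (Fin v → ℝ))
    (hDW : ∀ (n : ℕ) (ω : Ω), DW n ω = Xhat n ω - xc n)
    (DWt : ℕ → ℕ → Ω → (Fin v → ℝ))
    (hDWt0 : ∀ (N : ℕ) (ω : Ω), DWt N 0 ω = 0)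
    (hDWt : ∀ N : ℕ, 1 ≤ N → ∀ (n : ℕ) (ω : Ω) (k : Fin v), DWt N (n + 1) ω k
      = DWt N n ω k
        + h * ∑ r ∈ (midx v N).filter (fun r => 1 ≤ ∑ l, r l ∧ ∑ l, r l ≤ N),
            (1 / ((∏ l, Nat.factorial (r l) : ℕ) : ℝ))
              * mpd r (fun x => u x (t0 + n * h) k) (xc n) * ∏ l, (DWt N n ω l) ^ (r l)
        + ∑ r ∈ (midx v N).filter (fun r => (∑ l, r l) + 1 ≤ N),
            ∑ j : Fin d,
              (1 / ((∏ l, Nat.factorial (r l) : ℕ) : ℝ))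
                * mpd r (fun x => G x (t0 + n * h) k j) (xc n)
                * dW (n + 1) ω j * ∏ l, (DWt N n ω l) ^ (r l))
    (hUanalytic : ∀ (m : ℕ) (k : Fin v) (c y : Fin v → ℝ), HasSum
      (fun r : Fin v → ℕ =>
        (1 / ((∏ l, Nat.factorial (r l) : ℕ) : ℝ))
          * mpd r (fun x => u x (t0 + m * h) k) c * ∏ l, (y l) ^ (r l))
      (u (c + y) (t0 + m * h) k))
    (hGanalytic : ∀ (m : ℕ) (k : Fin v) (j : Fin d) (c y : Fin v → ℝ), HasSum
      (fun r : Fin v → ℕ =>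
        (1 / ((∏ l, Nat.factorial (r l) : ℕ) : ℝ))
          * mpd r (fun x => G x (t0 + m * h) k j) c * ∏ l, (y l) ^ (r l))
      (G (c + y) (t0 + m * h) k j)) :
    ∀ (n : ℕ), 1 ≤ n → ∀ ω : Ω,
      Filter.Tendsto (fun N : ℕ => DWt N n ω) Filter.atTop (nhds (DW n ω)) := by
  rintro n - ω
  induction n with
  | zero =>
    simp only [hDWt0, hDW, hX0, hxc0, sub_self]
    exact tendsto_const_nhds
  | succ n ih =>
    refine tendsto_pi_nhds.2 fun k => ?_
    have hdrift := tendsto_sum_taylorTerm_pos_order (hUanalytic n k (xc n)) ih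
    have hdiffusion := fun j => (tendsto_sum_taylorTerm_order_lt
      (hGanalytic n k j (xc n)) ih).mul_const (dW (n + 1) ω j)
    have hXhat : Xhat n ω = xc n + DW n ω := by rw [hDW]; abel
    rw [hDW, hX, hxc, hXhat, euler_step_sub_euler_step_apply (u · _) (G · _)]
    refine (((tendsto_pi_nhds.1 ih k).add (hdrift.const_mul h)).add
      (tendsto_finsetSum univ fun j _ => hdiffusion j)).congr' ?_
    filter_upwards [eventually_ge_atTop 1] with N hN
    rw [hDWt N hN, sum_comm]
    simp only [taylorTerm, sum_mul, mul_right_comm _ (dW (n + 1) ω _)]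

/-- **Pointwise convergence of the truncated effective-noise recursion.**  If the drift and
diffusion coefficients are real-analytic in the state variable, with multi-index Taylor series
at every point converging absolutely on all of `ℝᵛ`, and the noise increments are uniformly
bounded, then for every `n ≥ 1` and every `ω` the order-`N` truncated effective noise
converges, as `N → ∞`, to the exact effective noise. -/
theorem truncated_effective_noise_pointwise_convergence
    (v d : ℕ) (hv : 1 ≤ v) (hd : 1 ≤ d)
    (h : ℝ) (hh : 0 < h) (t0 : ℝ) (x0 : Fin v → ℝ)
    (u : (Fin v → ℝ) → ℝ → (Fin v → ℝ))
    (G : (Fin v → ℝ) → ℝ → Matrix (Fin v) (Fin d) ℝ)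
    {Ω : Type*} [MeasurableSpace Ω] (P : Measure Ω) [IsProbabilityMeasure P]
    (dW : ℕ → Ω → (Fin d → ℝ))
    (Xhat : ℕ → Ω → (Fin v → ℝ)) (xc : ℕ → (Fin v → ℝ))
    (hX0 : ∀ ω, Xhat 0 ω = x0)
    (hX : ∀ (n : ℕ) (ω : Ω), Xhat (n + 1) ω
        = Xhat n ω + h • u (Xhat n ω) (t0 + n * h)
          + (G (Xhat n ω) (t0 + n * h)).mulVec (dW (n + 1) ω))
    (hxc0 : xc 0 = x0)
    (hxc : ∀ n : ℕ, xc (n + 1) = xc n + h • u (xc n) (t0 + n * h))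
    (DW : ℕ → Ω → (Fin v → ℝ))
    (hDW : ∀ (n : ℕ) (ω : Ω), DW n ω = Xhat n ω - xc n)
    (DWt : ℕ → ℕ → Ω → (Fin v → ℝ))
    (hDWt0 : ∀ (N : ℕ) (ω : Ω), DWt N 0 ω = 0)
    (hDWt : ∀ N : ℕ, 1 ≤ N → ∀ (n : ℕ) (ω : Ω) (k : Fin v), DWt N (n + 1) ω k
      = DWt N n ω k
        + h * ∑ r ∈ (midx v N).filter (fun r => 1 ≤ ∑ l, r l ∧ ∑ l, r l ≤ N),
            (1 / ((∏ l, Nat.factorial (r l) : ℕ) : ℝ))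
              * mpd r (fun x => u x (t0 + n * h) k) (xc n) * ∏ l, (DWt N n ω l) ^ (r l)
        + ∑ r ∈ (midx v N).filter (fun r => (∑ l, r l) + 1 ≤ N),
            ∑ j : Fin d,
              (1 / ((∏ l, Nat.factorial (r l) : ℕ) : ℝ))
                * mpd r (fun x => G x (t0 + n * h) k j) (xc n)
                * dW (n + 1) ω j * ∏ l, (DWt N n ω l) ^ (r l))
    (hUanalytic : ∀ (m : ℕ) (k : Fin v) (c y : Fin v → ℝ), HasSum
      (fun r : Fin v → ℕ =>
        (1 / ((∏ l, Nat.factorial (r l) : ℕ) : ℝ))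
          * mpd r (fun x => u x (t0 + m * h) k) c * ∏ l, (y l) ^ (r l))
      (u (c + y) (t0 + m * h) k))
    (hGanalytic : ∀ (m : ℕ) (k : Fin v) (j : Fin d) (c y : Fin v → ℝ), HasSum
      (fun r : Fin v → ℕ =>
        (1 / ((∏ l, Nat.factorial (r l) : ℕ) : ℝ))
          * mpd r (fun x => G x (t0 + m * h) k j) c * ∏ l, (y l) ^ (r l))
      (G (c + y) (t0 + m * h) k j))
    (A : ℕ → Fin d → ℝ)
    (hA : ∀ (m : ℕ) (j : Fin d) (ω : Ω), |dW m ω j| ≤ A m j) :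
    ∀ (n : ℕ), 1 ≤ n → ∀ ω : Ω,
      Filter.Tendsto (fun N : ℕ => DWt N n ω) Filter.atTop (nhds (DW n ω)) :=
  truncated_effective_noise_pointwise_convergence_general v d h t0 x0 u G dW Xhat xc hX0 hX hxc0 hxc
    DW hDW DWt hDWt0 hDWt hUanalytic hGanalytic
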